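/- arXiv:2511.12646 — 5 statements merged into one kernel-verified Lean document; each statement's English description precedes it below -/
import Mathlib

section
/- Let θ be a second-order stationary point of the Kuramoto energy on a graph G (i.e., ∇E(θ) = 0 and Hess E(θ) ⪰ 0). Then for each vertex i, either ∑_{j ∈ N(i)} v_j = 0, or ∑_{j ∈ N(i)} v_j = μ_i v_i for some μ_i > 0, where v_k = (cos θ_k, sin θ_k). -/
open Real Classical

noncomputable section

/-- Real-valued adjacency indicator of a simple graph. -/
def adjW {V : Type*} (G : SimpleGraph V) (i j : V) : ℝ := if G.Adj i j then 1 else 0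

/-- The phasor (unit vector in the plane) associated with an angle. -/
def phasor (t : ℝ) : ℝ × ℝ := (Real.cos t, Real.sin t)

/-- The Kuramoto energy. -/
def kEnergy {V : Type*} [Fintype V] (G : SimpleGraph V) (θ : V → ℝ) : ℝ :=
  (1 / 2) * ∑ i, ∑ j, adjW G i j * (1 - Real.cos (θ i - θ j))

/-- The Hessian of the Kuramoto energy. -/
def kHess {V : Type*} [Fintype V] (G : SimpleGraph V) (θ : V → ℝ) : Matrix V V ℝ :=
  fun i j =>
    if i = j then ∑ k, adjW G i k * Real.cos (θ i - θ k)
    else -(adjW G i j * Real.cos (θ i - θ j))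

/-- First-order (equilibrium) condition of the homogeneous Kuramoto model. -/
def IsEquilibrium {V : Type*} [Fintype V] (G : SimpleGraph V) (θ : V → ℝ) : Prop :=
  ∀ i, ∑ j, adjW G i j * Real.sin (θ j - θ i) = 0

/-- Second-order stationary point of the Kuramoto energy. -/
def IsSOSP {V : Type*} [Fintype V] (G : SimpleGraph V) (θ : V → ℝ) : Prop :=
  IsEquilibrium G θ ∧ (kHess G θ).PosSemidef

/-!
Write each neighbour phasor `v_j` in the orthonormal frame `(v_i, v_i⊥)`. Summed over the
neighbours of `i`, the `v_i⊥`-component is the equilibrium sum `∑ sin (θ_j - θ_i) = 0`, and the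
`v_i`-component is the diagonal Hessian entry `H_ii = ∑ cos (θ_i - θ_j)`, which is nonnegative
because the Hessian is positive semidefinite. So `∑ v_j = H_ii v_i` with `H_ii ≥ 0`.
-/

theorem phasor_eq_cos_smul_add_sin_smul (s t : ℝ) :
    phasor t = Real.cos (s - t) • phasor s + Real.sin (t - s) • phasor (s + π / 2) := by
  simp only [phasor, Real.cos_add_pi_div_two, Real.sin_add_pi_div_two, Prod.smul_mk,
    Prod.mk_add_mk, smul_eq_mul, Prod.mk.injEq]
  rw [Real.cos_sub, Real.sin_sub]
  constructor
  · linear_combination (-Real.cos t) * Real.sin_sq_add_cos_sq s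
  · linear_combination (-Real.sin t) * Real.sin_sq_add_cos_sq s

theorem sum_smul_phasor_eq {ι : Type*} (S : Finset ι) (w θ : ι → ℝ) (s : ℝ) :
    ∑ j ∈ S, w j • phasor (θ j) =
      (∑ j ∈ S, w j * Real.cos (s - θ j)) • phasor s +
        (∑ j ∈ S, w j * Real.sin (θ j - s)) • phasor (s + π / 2) := by
  simp only [Finset.sum_smul, ← Finset.sum_add_distrib, mul_smul, ← smul_add,
    ← phasor_eq_cos_smul_add_sin_smul]

theorem kHess_apply_self {V : Type*} [Fintype V] (G : SimpleGraph V) (θ : V → ℝ) (i : V) :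
    kHess G θ i i = ∑ k, adjW G i k * Real.cos (θ i - θ k) :=
  if_pos rfl

theorem IsEquilibrium.sum_adjW_smul_phasor {V : Type*} [Fintype V] {G : SimpleGraph V}
    {θ : V → ℝ} (h : IsEquilibrium G θ) (i : V) :
    ∑ j, adjW G i j • phasor (θ j) = kHess G θ i i • phasor (θ i) := by
  rw [sum_smul_phasor_eq _ _ _ (θ i), h i, zero_smul, add_zero, kHess_apply_self]

theorem sosp_neighbor_sum_zero_or_positively_aligned
    {n : ℕ} (G : SimpleGraph (Fin n)) (θ : Fin n → ℝ)
    (hsosp : IsSOSP G θ) :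
    ∀ i, (∑ j, adjW G i j • phasor (θ j)) = 0 ∨
      ∃ μ : ℝ, 0 < μ ∧ ∑ j, adjW G i j • phasor (θ j) = μ • phasor (θ i) := by
  intro i
  obtain ⟨hequil, hpsd⟩ := hsosp
  rw [hequil.sum_adjW_smul_phasor i]
  rcases hpsd.diag_nonneg.eq_or_lt with hzero | hpos
  · exact Or.inl (by rw [← hzero, zero_smul])
  · exact Or.inr ⟨_, hpos, rfl⟩
end
end

section
/- Let G be a simple graph and let a, b be distinct vertices with N[a] = N[b] (closed twins). If θ is a configuration such that the equilibrium condition ∑_{j ∈ N(i)} v_j = μ_i v_i holds at i = a and i = b with μ_a ≥ 0 and μ_b ≥ 0 (where v_k = (cos θ_k, sin θ_k)), then v_a = v_b. -/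
open Real Classical

noncomputable section

theorem closed_twins_sync_of_nonneg_mu
    {n : ℕ} (G : SimpleGraph (Fin n)) (θ : Fin n → ℝ)
    (a b : Fin n) (hab : a ≠ b)
    (htwin : insert a (G.neighborSet a) = insert b (G.neighborSet b))
    (μa μb : ℝ) (hμa : 0 ≤ μa) (hμb : 0 ≤ μb)
    (ha : ∑ j, adjW G a j • phasor (θ j) = μa • phasor (θ a))
    (hb : ∑ j, adjW G b j • phasor (θ j) = μb • phasor (θ b)) :
    phasor (θ a) = phasor (θ b) := by

  have hadjba : G.Adj b a := by
    have : a ∈ insert b (G.neighborSet b) := by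
      rw [← htwin]; exact Set.mem_insert _ _
    rcases this with h | h
    · exact absurd h hab
    · exact h
  have hadjab : G.Adj a b := hadjba.symm
  have hsame : ∀ j, j ≠ a → j ≠ b → adjW G a j = adjW G b j := by
    intro j hja hjb
    have h1 : j ∈ insert a (G.neighborSet a) ↔ j ∈ insert b (G.neighborSet b) := by
      rw [htwin]
    simp only [Set.mem_insert_iff, SimpleGraph.mem_neighborSet, hja, hjb, false_or] at h1
    simp only [adjW, h1]
  -- key: ∑ (f - g) = v_b - v_a
  set va := phasor (θ a) with hva
  set vb := phasor (θ b) with hvb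
  have hdiff : μa • va - μb • vb = vb - va := by
    rw [← ha, ← hb, ← Finset.sum_sub_distrib]
    have hsub : ∀ j : Fin n, j ∉ ({a, b} : Finset (Fin n)) →
        adjW G a j • phasor (θ j) - adjW G b j • phasor (θ j) = 0 := by
      intro j hj
      simp only [Finset.mem_insert, Finset.mem_singleton, not_or] at hj
      rw [hsame j hj.1 hj.2, sub_self]
    rw [← Finset.sum_subset (Finset.subset_univ ({a, b} : Finset (Fin n)))
      (fun j _ hj => hsub j hj), Finset.sum_pair hab]
    have haa : adjW G a a = 0 := by simp [adjW]
    have hbb : adjW G b b = 0 := by simp [adjW]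
    have hab1 : adjW G a b = 1 := by simp [adjW, hadjab]
    have hba1 : adjW G b a = 1 := by simp [adjW, hadjba]
    rw [haa, hbb, hab1, hba1]
    simp only [zero_smul, one_smul]
    abel
  have hkey : (μa + 1) • va = (μb + 1) • vb := by
    have := hdiff
    rw [add_smul, add_smul, one_smul, one_smul]
    linear_combination (norm := module) this
  have hc : (μa + 1) * Real.cos (θ a) = (μb + 1) * Real.cos (θ b) ∧
      (μa + 1) * Real.sin (θ a) = (μb + 1) * Real.sin (θ b) := by
    have h1 := congrArg Prod.fst hkey
    have h2 := congrArg Prod.snd hkey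
    simp only [hva, hvb, phasor, Prod.smul_fst, Prod.smul_snd, smul_eq_mul] at h1 h2
    exact ⟨h1, h2⟩
  obtain ⟨h1, h2⟩ := hc
  have hsq : (μa + 1) ^ 2 = (μb + 1) ^ 2 := by
    have ca := Real.sin_sq_add_cos_sq (θ a)
    have cb := Real.sin_sq_add_cos_sq (θ b)
    calc (μa + 1) ^ 2 = ((μa+1) * Real.sin (θ a))^2 + ((μa+1) * Real.cos (θ a))^2 := by
          linear_combination (-(μa+1)^2) * ca
      _ = ((μb+1) * Real.sin (θ b))^2 + ((μb+1) * Real.cos (θ b))^2 := by rw [h1, h2]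
      _ = (μb + 1) ^ 2 := by linear_combination (μb+1)^2 * cb
  have hμ : μa + 1 = μb + 1 := by
    nlinarith
  have hpos : (0:ℝ) < μa + 1 := by linarith
  rw [hμ] at hkey
  exact smul_right_injective _ (by positivity : (μb + 1) ≠ 0) hkey
end
end

section
/- Every star graph S_n (one center adjacent to n leaves, n ≥ 1) has the property that every second-order stationary point of its Kuramoto energy is synchronous: all vertices share the same phasor. -/
open Real Classical

noncomputable section

/-- The star graph with center `0` and `n` leaves. -/
def starGraph (n : ℕ) : SimpleGraph (Fin (n + 1)) where
  Adj i j := i ≠ j ∧ (i = 0 ∨ j = 0)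
  symm := by
    constructor
    intro i j h
    exact ⟨h.1.symm, h.2.symm⟩
  loopless := by
    constructor
    intro i h
    exact h.1 rfl

/-!
At an equilibrium, the torque on a leaf of the star comes from the center alone, so
`sin (θ leaf - θ center) = 0`; the corresponding diagonal entry of the Hessian is
`cos (θ leaf - θ center)`, which must be nonnegative. Hence the phase difference is a multiple
of `2π` and every leaf is synchronized with the center.
-/

lemma phasor_eq_of_sin_sub_eq_zero_of_cos_sub_nonneg {a b : ℝ} (hsin : sin (a - b) = 0)
    (hcos : 0 ≤ cos (a - b)) : phasor a = phasor b := by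
  have hcos_one : cos (a - b) = 1 := by nlinarith [sin_sq_add_cos_sq (a - b)]
  have hab : a = (a - b) + b := by ring
  rw [phasor, phasor, hab, cos_add, sin_add, hcos_one, hsin]
  simp

section Pendant

variable {V : Type*} [Fintype V] {G : SimpleGraph V} {i j : V}

lemma sum_adjW_mul_of_adj_iff (hij : ∀ k, G.Adj i k ↔ k = j) (f : V → ℝ) :
    ∑ k, adjW G i k * f k = f j := by
  simp [adjW, hij]

lemma kHess_self (θ : V → ℝ) (i : V) :
    kHess G θ i i = ∑ k, adjW G i k * cos (θ i - θ k) :=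
  if_pos rfl

theorem IsSOSP.phasor_eq_of_adj_iff {θ : V → ℝ} (hθ : IsSOSP G θ)
    (hij : ∀ k, G.Adj i k ↔ k = j) : phasor (θ i) = phasor (θ j) := by
  have hsin : sin (θ i - θ j) = 0 := by
    have htorque := hθ.1 i
    rw [sum_adjW_mul_of_adj_iff hij] at htorque
    rw [← neg_sub, sin_neg, htorque, neg_zero]
  have hcos : 0 ≤ cos (θ i - θ j) := by
    simpa only [kHess_self, sum_adjW_mul_of_adj_iff hij] using hθ.2.diag_nonneg (i := i)
  exact phasor_eq_of_sin_sub_eq_zero_of_cos_sub_nonneg hsin hcos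

end Pendant

lemma starGraph_adj_iff_of_ne_zero {n : ℕ} {i : Fin (n + 1)} (hi : i ≠ 0) (k : Fin (n + 1)) :
    (starGraph n).Adj i k ↔ k = 0 := by
  show i ≠ k ∧ (i = 0 ∨ k = 0) ↔ k = 0
  constructor
  · rintro ⟨-, h | h⟩
    exacts [absurd h hi, h]
  · rintro rfl
    exact ⟨hi, Or.inr rfl⟩

theorem star_graph_sosp_synchronous_general
    (n : ℕ) (θ : Fin (n + 1) → ℝ)
    (hsosp : IsSOSP (starGraph n) θ) :
    ∀ i j, phasor (θ i) = phasor (θ j) := by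
  have to_center : ∀ i, phasor (θ i) = phasor (θ 0) := fun i => by
    rcases eq_or_ne i 0 with rfl | hi
    · rfl
    · exact hsosp.phasor_eq_of_adj_iff (starGraph_adj_iff_of_ne_zero hi)
  intro i j
  rw [to_center i, to_center j]

theorem star_graph_sosp_synchronous
    (n : ℕ) (hn : 1 ≤ n) (θ : Fin (n + 1) → ℝ)
    (hsosp : IsSOSP (starGraph n) θ) :
    ∀ i j, phasor (θ i) = phasor (θ j) :=
  star_graph_sosp_synchronous_general n θ hsosp
end
end

section
/- In a windmill graph W_{k,m} (m copies of K_{k+1} sharing one central vertex), every second-order stationary point of the Kuramoto energy is synchronous: all phasors coincide. -/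
open Real Classical

noncomputable section

/-- The windmill graph `W_{k,m}`: `m` cliques, each on `k+1` vertices (one clique
vertex being the shared center `none`). -/
def windmill (k m : ℕ) : SimpleGraph (Option (Fin m × Fin k)) where
  Adj x y := x ≠ y ∧ ∀ a i b j, x = some (a, i) → y = some (b, j) → a = b
  symm := by
    constructor
    intro x y h
    exact ⟨h.1.symm, fun a i b j hx hy => (h.2 b j a i hy hx).symm⟩
  loopless := by
    constructor
    intro x h
    exact h.1 rfl

/-!
At an equilibrium, the phasor of every vertex of blade `a` is parallel to the phasor sum `P_a`
of the clique formed by blade `a` and the center, and summing over the blade shows that the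
center's phasor is parallel to `P_a` as well. Feeding the Hessian the cosine and the sine
coordinates of the blade phasors gives a total of `-2 ∑ᵢ ∑ⱼ cos² (θᵢ - θⱼ) < 0` whenever
`P_a = 0`; hence `P_a ≠ 0` at a second-order stationary point, and every phasor is `±` the
center's. Finally, on the indicator vector of the antipodal vertices the Hessian form equals minus
the number of edges joining the two classes, so no vertex adjacent to the center is antipodal.
-/

open Matrix

lemma cos_sub_eq_neg_one_of_phasor_eq_neg {s t : ℝ} (h : phasor s = -phasor t) :
    cos (s - t) = -1 := by
  simp only [phasor, Prod.neg_mk, Prod.mk.injEq] at h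
  rw [cos_sub, h.1, h.2]
  linear_combination -(sin_sq_add_cos_sq t)

lemma phasor_eq_or_eq_neg_of_sin_sub_eq_zero {s t : ℝ} (h : sin (s - t) = 0) :
    phasor s = phasor t ∨ phasor s = -phasor t := by
  have hs : s = (s - t) + t := by ring
  rcases sin_eq_zero_iff_cos_eq.mp h with hc | hc
  · left; rw [hs, phasor, cos_add, sin_add, h, hc]; simp [phasor]
  · right; rw [hs, phasor, cos_add, sin_add, h, hc]; simp [phasor]

lemma sin_sub_eq_zero_of_parallel {s t : ℝ} {P : ℝ × ℝ} (hP : P ≠ 0)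
    (hs : cos s * P.2 = sin s * P.1) (ht : cos t * P.2 = sin t * P.1) : sin (s - t) = 0 := by
  have h1 : P.1 * sin (s - t) = 0 := by
    rw [sin_sub]; linear_combination cos s * ht - cos t * hs
  have h2 : P.2 * sin (s - t) = 0 := by
    rw [sin_sub]; linear_combination sin s * ht - sin t * hs
  by_contra hne
  exact hP (Prod.ext (by simpa [hne] using h1) (by simpa [hne] using h2))

section Kuramoto

variable {V : Type*}

lemma adjW_self (G : SimpleGraph V) (i : V) : adjW G i i = 0 := by
  simp [adjW]

lemma adjW_comm (G : SimpleGraph V) (i j : V) : adjW G i j = adjW G j i := by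
  simp [adjW, G.adj_comm]

lemma adjW_nonneg (G : SimpleGraph V) (i j : V) : 0 ≤ adjW G i j := by
  unfold adjW; split_ifs <;> norm_num

lemma adjW_of_adj {G : SimpleGraph V} {i j : V} (h : G.Adj i j) : adjW G i j = 1 := if_pos h

variable [Fintype V]

lemma dotProduct_diagonal_sub_mulVec (w : Matrix V V ℝ) (hw : w.IsSymm) (x : V → ℝ) :
    x ⬝ᵥ ((diagonal (fun i => ∑ j, w i j) - w) *ᵥ x)
      = (1 / 2) * ∑ i, ∑ j, w i j * (x i - x j) ^ 2 := by
  have hswap : ∑ i, ∑ j, w i j * x j ^ 2 = ∑ i, ∑ j, w i j * x i ^ 2 := by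
    rw [Finset.sum_comm]
    exact Fintype.sum_congr _ _ fun i => Fintype.sum_congr _ _ fun j => by rw [hw.apply j i]
  have expand : ∀ i j, w i j * (x i - x j) ^ 2
      = w i j * x i ^ 2 + w i j * x j ^ 2 - 2 * (x i * (w i j * x j)) := fun i j => by ring
  have hdiag : x ⬝ᵥ (diagonal (fun i => ∑ j, w i j) *ᵥ x) = ∑ i, ∑ j, w i j * x i ^ 2 := by
    simp only [dotProduct, mulVec_diagonal, Finset.sum_mul, Finset.mul_sum]
    exact Fintype.sum_congr _ _ fun i => Fintype.sum_congr _ _ fun j => by ring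
  have hoff : x ⬝ᵥ (w *ᵥ x) = ∑ i, ∑ j, x i * (w i j * x j) := by
    simp only [dotProduct, mulVec, Finset.mul_sum]
  rw [sub_mulVec, dotProduct_sub, hdiag, hoff]
  simp only [expand, Finset.sum_sub_distrib, Finset.sum_add_distrib, hswap, ← Finset.mul_sum]
  ring

lemma kHess_eq_diagonal_sub (G : SimpleGraph V) (θ : V → ℝ) :
    kHess G θ = diagonal (fun i => ∑ j, adjW G i j * cos (θ i - θ j))
      - of fun i j => adjW G i j * cos (θ i - θ j) := by
  ext i j
  by_cases h : i = j
  · subst h; simp [kHess, adjW_self]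
  · simp [kHess, h]

lemma dotProduct_kHess_mulVec (G : SimpleGraph V) (θ x : V → ℝ) :
    x ⬝ᵥ (kHess G θ *ᵥ x)
      = (1 / 2) * ∑ i, ∑ j, adjW G i j * cos (θ i - θ j) * (x i - x j) ^ 2 := by
  rw [kHess_eq_diagonal_sub]
  refine dotProduct_diagonal_sub_mulVec _ ?_ x
  refine IsSymm.ext fun i j => ?_
  simp [adjW_comm G i j, ← cos_neg (θ i - θ j)]

variable {G : SimpleGraph V} {θ : V → ℝ}

lemma IsEquilibrium.cos_mul_sum_sin (h : IsEquilibrium G θ) (i : V) :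
    cos (θ i) * ∑ j, adjW G i j * sin (θ j) = sin (θ i) * ∑ j, adjW G i j * cos (θ j) := by
  have hi := h i
  simp only [sin_sub, mul_sub, Finset.sum_sub_distrib, sub_eq_zero] at hi
  calc _ = ∑ j, adjW G i j * (sin (θ j) * cos (θ i)) := by
        rw [Finset.mul_sum]; exact Fintype.sum_congr _ _ fun j => by ring
    _ = ∑ j, adjW G i j * (cos (θ j) * sin (θ i)) := hi
    _ = _ := by rw [Finset.mul_sum]; exact Fintype.sum_congr _ _ fun j => by ring

lemma sum_adjW_cos_mul_sq_nonneg (h : (kHess G θ).PosSemidef) (x : V → ℝ) :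
    0 ≤ ∑ i, ∑ j, adjW G i j * cos (θ i - θ j) * (x i - x j) ^ 2 := by
  have hx := h.dotProduct_mulVec_nonneg x
  rw [star_trivial, dotProduct_kHess_mulVec] at hx
  linarith

lemma phasor_eq_of_adj_of_forall_eq_or_eq_neg (h : (kHess G θ).PosSemidef) (w : ℝ × ℝ)
    (hw : ∀ v, phasor (θ v) = w ∨ phasor (θ v) = -w) {u v : V} (huv : G.Adj u v) :
    phasor (θ u) = phasor (θ v) := by
  have hpm : ∀ i j, phasor (θ i) = phasor (θ j) ∨ phasor (θ i) = -phasor (θ j) := by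
    intro i j
    rcases hw i with hi | hi <;> rcases hw j with hj | hj <;> simp [hi, hj]
  by_contra hne
  set x : V → ℝ := fun i => if phasor (θ i) = phasor (θ u) then 0 else 1
  have hcos : ∀ i j, cos (θ i - θ j) * (x i - x j) ^ 2 = -(x i - x j) ^ 2 := by
    intro i j
    by_cases hx : x i = x j
    · simp [hx]
    have hij := (hpm i j).resolve_left fun he => hx (by simp [x, he])
    rw [cos_sub_eq_neg_one_of_phasor_eq_neg hij]
    ring
  have hxuv : (x u - x v) ^ 2 = 1 := by simp [x, Ne.symm hne]
  have hpos : 0 < ∑ i, ∑ j, adjW G i j * (x i - x j) ^ 2 :=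
    Finset.sum_pos' (fun i _ => Finset.sum_nonneg fun j _ => by positivity [adjW_nonneg G i j])
      ⟨u, Finset.mem_univ u, Finset.sum_pos' (fun j _ => by positivity [adjW_nonneg G u j])
        ⟨v, Finset.mem_univ v, by rw [adjW_of_adj huv, hxuv]; norm_num⟩⟩
  have hnonneg := sum_adjW_cos_mul_sq_nonneg h x
  simp only [mul_assoc, hcos, mul_neg, Finset.sum_neg_distrib] at hnonneg
  linarith

end Kuramoto

section CliqueForm

variable {ι : Type*} [Fintype ι]

/-- Twice the Hessian form of the complete graph on `ι` plus an apex of angle `t`, at a test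
vector that vanishes at the apex. -/
def cliqueForm (t : ℝ) (φ g : ι → ℝ) : ℝ :=
  2 * ∑ i, cos (φ i - t) * g i ^ 2 + ∑ i, ∑ j, cos (φ i - φ j) * (g i - g j) ^ 2

lemma sum_sum_cos_sub (φ : ι → ℝ) :
    ∑ i, ∑ j, cos (φ i - φ j) = (∑ i, cos (φ i)) ^ 2 + (∑ i, sin (φ i)) ^ 2 := by
  simp only [cos_sub, Finset.sum_add_distrib, sq, Finset.sum_mul_sum]

lemma cliqueForm_cos_add_cliqueForm_sin {t : ℝ} {φ : ι → ℝ}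
    (h : phasor t + ∑ i, phasor (φ i) = 0) :
    cliqueForm t φ (fun i => cos (φ i)) + cliqueForm t φ (fun i => sin (φ i))
      = -2 * ∑ i, ∑ j, cos (φ i - φ j) ^ 2 := by
  have hcos : ∑ i, cos (φ i) = -cos t := by
    have := congrArg Prod.fst h
    simp only [Prod.fst_add, Prod.fst_sum, phasor, Prod.fst_zero] at this
    linarith
  have hsin : ∑ i, sin (φ i) = -sin t := by
    have := congrArg Prod.snd h
    simp only [Prod.snd_add, Prod.snd_sum, phasor, Prod.snd_zero] at this
    linarith
  have hapex : ∑ i, cos (φ i - t) = -1 := by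
    simp only [cos_sub, Finset.sum_add_distrib, ← Finset.sum_mul, hcos, hsin]
    linear_combination -(sin_sq_add_cos_sq t)
  have hclique : ∑ i, ∑ j, cos (φ i - φ j) = 1 := by
    rw [sum_sum_cos_sub, hcos, hsin]
    linear_combination sin_sq_add_cos_sq t
  have hterm : ∀ i j, cos (φ i - φ j) * (cos (φ i) - cos (φ j)) ^ 2
      + cos (φ i - φ j) * (sin (φ i) - sin (φ j)) ^ 2
      = 2 * cos (φ i - φ j) - 2 * cos (φ i - φ j) ^ 2 := fun i j => by
    rw [← mul_add, show (cos (φ i) - cos (φ j)) ^ 2 + (sin (φ i) - sin (φ j)) ^ 2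
      = 2 - 2 * cos (φ i - φ j) by
        rw [cos_sub]; linear_combination sin_sq_add_cos_sq (φ i) + sin_sq_add_cos_sq (φ j)]
    ring
  have hapex_term : ∀ i, cos (φ i - t) * cos (φ i) ^ 2 + cos (φ i - t) * sin (φ i) ^ 2
      = cos (φ i - t) := fun i => by
    rw [← mul_add, cos_sq_add_sin_sq, mul_one]
  calc _ = 2 * ∑ i, (cos (φ i - t) * cos (φ i) ^ 2 + cos (φ i - t) * sin (φ i) ^ 2)
        + ∑ i, ∑ j, (cos (φ i - φ j) * (cos (φ i) - cos (φ j)) ^ 2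
          + cos (φ i - φ j) * (sin (φ i) - sin (φ j)) ^ 2) := by
        simp only [cliqueForm, Finset.sum_add_distrib]
        ring
    _ = _ := by
        simp only [hapex_term, hterm, Finset.sum_sub_distrib, ← Finset.mul_sum, hapex, hclique]
        ring

lemma card_le_sum_sum_cos_sub_sq (φ : ι → ℝ) :
    (Fintype.card ι : ℝ) ≤ ∑ i, ∑ j, cos (φ i - φ j) ^ 2 :=
  calc (Fintype.card ι : ℝ) = ∑ i, cos (φ i - φ i) ^ 2 := by simp
    _ ≤ _ := Finset.sum_le_sum fun i _ =>
      Finset.single_le_sum (f := fun j => cos (φ i - φ j) ^ 2) (fun j _ => sq_nonneg _)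
        (Finset.mem_univ i)

end CliqueForm

section Windmill

variable {k m : ℕ}

@[simp] lemma windmill_adj_none_some (p : Fin m × Fin k) : (windmill k m).Adj none (some p) := by
  simp [windmill]

@[simp] lemma windmill_adj_some_some {a b : Fin m} {i j : Fin k} :
    (windmill k m).Adj (some (a, i)) (some (b, j)) ↔ a = b ∧ i ≠ j := by
  refine ⟨fun ⟨hne, h⟩ => ?_, ?_⟩
  · obtain rfl := h a i b j rfl rfl
    exact ⟨rfl, fun hij => hne (by rw [hij])⟩
  · rintro ⟨rfl, hij⟩
    refine ⟨by simpa using hij, fun a' i' b' j' h h' => ?_⟩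
    simp only [Option.some.injEq, Prod.mk.injEq] at h h'
    rw [← h.1, ← h'.1]

lemma windmill_sum_adjW_none_mul (f : Option (Fin m × Fin k) → ℝ) :
    ∑ v, adjW (windmill k m) none v * f v = ∑ p, f (some p) := by
  simp [Fintype.sum_option, adjW]

lemma windmill_sum_adjW_some_mul (a : Fin m) (i : Fin k) (f : Option (Fin m × Fin k) → ℝ) :
    ∑ v, adjW (windmill k m) (some (a, i)) v * f v
      = f none + ∑ j, f (some (a, j)) - f (some (a, i)) := by
  rw [Fintype.sum_option, Fintype.sum_prod_type]
  simp only [adjW, windmill_adj_some_some, (windmill k m).adj_comm (some _) none,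
    windmill_adj_none_some, ite_mul, one_mul, zero_mul, ite_and, ↓reduceIte]
  rw [Fintype.sum_eq_single a fun b hb => by simp [Ne.symm hb]]
  simp only [↓reduceIte]
  rw [add_sub_assoc, ← Finset.sum_erase_eq_sub (Finset.mem_univ i), ← Finset.sum_filter,
    Finset.filter_ne]

def bladeVec (a : Fin m) (g : Fin k → ℝ) : Option (Fin m × Fin k) → ℝ
  | none => 0
  | some (b, i) => if b = a then g i else 0

lemma windmill_sum_cos_mul_sq_bladeVec (θ : Option (Fin m × Fin k) → ℝ) (a : Fin m)
    (g : Fin k → ℝ) :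
    ∑ u, ∑ v,
        adjW (windmill k m) u v * cos (θ u - θ v) * (bladeVec a g u - bladeVec a g v) ^ 2
      = cliqueForm (θ none) (fun i => θ (some (a, i))) g := by
  simp only [cliqueForm, mul_assoc]
  rw [Fintype.sum_option, windmill_sum_adjW_none_mul, Fintype.sum_prod_type]
  simp only [windmill_sum_adjW_some_mul, Fintype.sum_prod_type, bladeVec, sub_self]
  rw [Fintype.sum_eq_single a fun b hb => by simp [hb],
    Fintype.sum_eq_single a fun b hb => by simp [hb]]
  simp only [↓reduceIte, zero_sub, even_two, Even.neg_pow, sub_zero, mul_zero,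
    zero_pow two_ne_zero]
  simp only [← neg_sub (θ (some _)) (θ none), cos_neg, Finset.sum_add_distrib]
  ring

def bladePhasorSum (θ : Option (Fin m × Fin k) → ℝ) (a : Fin m) : ℝ × ℝ :=
  phasor (θ none) + ∑ j, phasor (θ (some (a, j)))

variable {θ : Option (Fin m × Fin k) → ℝ}

lemma bladePhasorSum_ne_zero (hpsd : (kHess (windmill k m) θ).PosSemidef) (hk : 0 < k)
    (a : Fin m) : bladePhasorSum θ a ≠ 0 := by
  intro h
  have hcos := sum_adjW_cos_mul_sq_nonneg hpsd (bladeVec a fun i => cos (θ (some (a, i))))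
  have hsin := sum_adjW_cos_mul_sq_nonneg hpsd (bladeVec a fun i => sin (θ (some (a, i))))
  rw [windmill_sum_cos_mul_sq_bladeVec] at hcos hsin
  have hsum := cliqueForm_cos_add_cliqueForm_sin h
  have hcard := card_le_sum_sum_cos_sub_sq fun i => θ (some (a, i))
  rw [Fintype.card_fin] at hcard
  have hk' : (0 : ℝ) < k := Nat.cast_pos.mpr hk
  linarith

lemma IsEquilibrium.windmill_cos_mul_bladePhasorSum_snd (heq : IsEquilibrium (windmill k m) θ)
    (a : Fin m) (i : Fin k) :
    cos (θ (some (a, i))) * (bladePhasorSum θ a).2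
      = sin (θ (some (a, i))) * (bladePhasorSum θ a).1 := by
  have h := heq.cos_mul_sum_sin (some (a, i))
  rw [windmill_sum_adjW_some_mul, windmill_sum_adjW_some_mul] at h
  simp only [bladePhasorSum, phasor, Prod.fst_add, Prod.snd_add, Prod.fst_sum, Prod.snd_sum]
  linear_combination h

lemma IsEquilibrium.windmill_cos_none_mul_bladePhasorSum_snd
    (heq : IsEquilibrium (windmill k m) θ) (a : Fin m) :
    cos (θ none) * (bladePhasorSum θ a).2 = sin (θ none) * (bladePhasorSum θ a).1 := by
  have h := Finset.sum_congr rfl fun i (_ : i ∈ Finset.univ) =>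
    heq.windmill_cos_mul_bladePhasorSum_snd a i
  simp only [← Finset.sum_mul] at h
  have hfst : ∑ i, cos (θ (some (a, i))) = (bladePhasorSum θ a).1 - cos (θ none) := by
    simp [bladePhasorSum, phasor, Prod.fst_sum]
  have hsnd : ∑ i, sin (θ (some (a, i))) = (bladePhasorSum θ a).2 - sin (θ none) := by
    simp [bladePhasorSum, phasor, Prod.snd_sum]
  rw [hfst, hsnd] at h
  linear_combination -h

lemma IsSOSP.windmill_phasor_eq_or_eq_neg (hsosp : IsSOSP (windmill k m) θ)
    (v : Option (Fin m × Fin k)) :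
    phasor (θ v) = phasor (θ none) ∨ phasor (θ v) = -phasor (θ none) := by
  rcases v with _ | ⟨a, i⟩
  · exact Or.inl rfl
  · exact phasor_eq_or_eq_neg_of_sin_sub_eq_zero <|
      sin_sub_eq_zero_of_parallel (bladePhasorSum_ne_zero hsosp.2 i.pos a)
        (hsosp.1.windmill_cos_mul_bladePhasorSum_snd a i)
        (hsosp.1.windmill_cos_none_mul_bladePhasorSum_snd a)

end Windmill

theorem windmill_sosp_synchronous
    (k m : ℕ) (θ : Option (Fin m × Fin k) → ℝ)
    (hsosp : IsSOSP (windmill k m) θ) :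
    ∀ x y, phasor (θ x) = phasor (θ y) := by
  have hcenter : ∀ v, phasor (θ v) = phasor (θ none) := by
    rintro (_ | p)
    · rfl
    · exact phasor_eq_of_adj_of_forall_eq_or_eq_neg hsosp.2 _ hsosp.windmill_phasor_eq_or_eq_neg
        (windmill_adj_none_some p).symm
  intro x y
  rw [hcenter x, hcenter y]
end
end

section
/- Let G be a simple graph and θ a second-order stationary point of the Kuramoto energy on G. If a vertex u has exactly one neighbor w (u is a pendant vertex), then v_u = v_w, where v_k = (cos θ_k, sin θ_k). -/
open Real Classical

noncomputable section

/-! At a pendant vertex u with neighbour w, the equilibrium equation at u reduces to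
sin (θ u - θ w) = 0 and the diagonal Hessian entry at u to cos (θ u - θ w) ≥ 0. Together they
force cos (θ u - θ w) = 1, i.e. θ u ≡ θ w mod 2π. -/

theorem phasor_eq_of_cos_sub_eq_one {a b : ℝ} (h : Real.cos (a - b) = 1) :
    phasor a = phasor b := by
  obtain ⟨k, hk⟩ := (Real.cos_eq_one_iff (a - b)).mp h
  have ha : a = b + k * (2 * π) := by linarith
  simp only [phasor, ha, Real.cos_add_int_mul_two_pi, Real.sin_add_int_mul_two_pi]

theorem cos_eq_one_of_sin_eq_zero_of_cos_nonneg {x : ℝ} (hsin : Real.sin x = 0)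
    (hcos : 0 ≤ Real.cos x) : Real.cos x = 1 := by
  nlinarith [Real.sin_sq_add_cos_sq x]

theorem adjW_eq_zero_of_not_adj {V : Type*} {G : SimpleGraph V} {i j : V} (h : ¬G.Adj i j) :
    adjW G i j = 0 :=
  if_neg h

theorem sum_adjW_mul_of_neighborSet_eq_singleton {V : Type*} [Fintype V] {G : SimpleGraph V}
    {u w : V} (hpendant : G.neighborSet u = {w}) (f : V → ℝ) :
    ∑ j, adjW G u j * f j = f w := by
  have hadj : ∀ j, G.Adj u j ↔ j = w := fun j => by
    rw [← SimpleGraph.mem_neighborSet, hpendant, Set.mem_singleton_iff]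
  rw [Finset.sum_eq_single w
    (fun j _ hj => by rw [adjW_eq_zero_of_not_adj (mt (hadj j).mp hj), zero_mul])
    (fun hw => absurd (Finset.mem_univ w) hw), adjW, if_pos ((hadj w).mpr rfl), one_mul]

theorem IsEquilibrium.sin_sub_eq_zero_of_neighborSet_eq_singleton {V : Type*} [Fintype V]
    {G : SimpleGraph V} {θ : V → ℝ} (hθ : IsEquilibrium G θ) {u w : V}
    (hpendant : G.neighborSet u = {w}) : Real.sin (θ u - θ w) = 0 := by
  have h := hθ u
  rw [sum_adjW_mul_of_neighborSet_eq_singleton hpendant] at h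
  rw [← neg_sub, Real.sin_neg, h, neg_zero]

theorem cos_sub_nonneg_of_kHess_posSemidef {V : Type*} [Fintype V]
    {G : SimpleGraph V} {θ : V → ℝ} (hθ : (kHess G θ).PosSemidef) {u w : V}
    (hpendant : G.neighborSet u = {w}) : 0 ≤ Real.cos (θ u - θ w) := by
  have h : 0 ≤ kHess G θ u u := hθ.diag_nonneg
  rwa [kHess_apply_self, sum_adjW_mul_of_neighborSet_eq_singleton hpendant
    (fun k => Real.cos (θ u - θ k))] at h

theorem pendant_vertex_sync_at_sosp
    {n : ℕ} (G : SimpleGraph (Fin n)) (θ : Fin n → ℝ)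
    (u w : Fin n) (hpendant : G.neighborSet u = {w})
    (hsosp : IsSOSP G θ) :
    phasor (θ u) = phasor (θ w) :=
  phasor_eq_of_cos_sub_eq_one <| cos_eq_one_of_sin_eq_zero_of_cos_nonneg
    (hsosp.1.sin_sub_eq_zero_of_neighborSet_eq_singleton hpendant)
    (cos_sub_nonneg_of_kHess_posSemidef hsosp.2 hpendant)
end
end
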